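/- Let α > 0 with 10α ≤ c. Suppose c ≥ 2, m ≥ n + c + 2, n ≥ 20, and n ≤ 10αm/c − 1. Then Pr[|I₁ ∩ B_New^π| ≥ 2] = Pr[|J₁ ∩ S_New^π| ≥ 2] ≥ (c²/12800)·(n²/m²)·(1 − 10α/c)^c, where Pr is over a uniformly random valid assignment π. -/

import Mathlib

open Finset

/-- Labels for agents: old buyer, new buyer, old seller, new seller. -/
inductive Label : Type
  | BO | BN | SO | SN
deriving DecidableEq

instance : Fintype Label :=
  ⟨{.BO, .BN, .SO, .SN}, fun x => by cases x <;> simp⟩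

/-- Total number of agents: `m` old buyers, `n` old sellers, `c` new buyers and `c` new
sellers. -/
def NN (m n c : ℕ) : ℕ := m + n + 2 * c

/-- The set of indices carrying a given label under the assignment `π`. -/
def labelSet (m n c : ℕ) (L : Label) (π : Fin (NN m n c) → Label) :
    Finset (Fin (NN m n c)) :=
  Finset.univ.filter (fun i => π i = L)

/-- Valid assignments: exactly `m` old buyers, `c` new buyers, `n` old sellers and
`c` new sellers. -/
def validAssignments (m n c : ℕ) : Finset (Fin (NN m n c) → Label) :=
  Finset.univ.filter (fun π =>
    (labelSet m n c .BO π).card = m ∧ (labelSet m n c .BN π).card = c ∧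
    (labelSet m n c .SO π).card = n ∧ (labelSet m n c .SN π).card = c)

/-- `p = ⌈n/10⌉`. -/
def pVal (n : ℕ) : ℕ := (n + 9) / 10

/-- `I₁`: the indices of the top `p` quantiles (1-based indices `{1,…,p}`). -/
def I1 (m n c : ℕ) : Finset (Fin (NN m n c)) :=
  Finset.univ.filter (fun i => (i : ℕ) < pVal n)

/-- `I₂`: 1-based indices `{p+1,…,2p}`. -/
def I2 (m n c : ℕ) : Finset (Fin (NN m n c)) :=
  Finset.univ.filter (fun i => pVal n ≤ (i : ℕ) ∧ (i : ℕ) < 2 * pVal n)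

/-- `J₁`: 1-based indices `{N-p+1,…,N}`. -/
def J1 (m n c : ℕ) : Finset (Fin (NN m n c)) :=
  Finset.univ.filter (fun i => NN m n c - pVal n ≤ (i : ℕ))

/-- `J₂`: 1-based indices `{N-2p+1,…,N-p}`. -/
def J2 (m n c : ℕ) : Finset (Fin (NN m n c)) :=
  Finset.univ.filter (fun i =>
    NN m n c - 2 * pVal n ≤ (i : ℕ) ∧ (i : ℕ) < NN m n c - pVal n)

/-- The good event `E₁`: at least 2 new buyers in `I₁`, at least 1 old buyer in `I₂`,
at least 2 new sellers in `J₁`, at least 1 old seller in `J₂`. -/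
def E1 (m n c : ℕ) : Finset (Fin (NN m n c) → Label) :=
  (validAssignments m n c).filter (fun π =>
    2 ≤ (I1 m n c ∩ labelSet m n c .BN π).card ∧
    1 ≤ (I2 m n c ∩ labelSet m n c .BO π).card ∧
    2 ≤ (J1 m n c ∩ labelSet m n c .SN π).card ∧
    1 ≤ (J2 m n c ∩ labelSet m n c .SO π).card)

/-- The bad event `E₂`: `E₁` fails and all new sellers are among the top `2n + 2c`
indices. -/
def E2 (m n c : ℕ) : Finset (Fin (NN m n c) → Label) :=
  (validAssignments m n c).filter (fun π =>
    π ∉ E1 m n c ∧ ∀ i ∈ labelSet m n c .SN π, (i : ℕ) < 2 * n + 2 * c)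

/-- The probability of an event under a uniformly random valid assignment. -/
noncomputable def prOf (m n c : ℕ) (E : Finset (Fin (NN m n c) → Label)) : ℝ :=
  (E.card : ℝ) / (validAssignments m n c).card

/-!
Reversing the order of the indices while exchanging new buyers with new sellers is an
involution of the valid assignments that carries `I₁` onto `J₁`, which gives the equality.

The valid assignments are invariant under permutations of the indices, so the set of new
sellers of a uniform valid assignment is a uniform `c`-subset of the `N` indices. Choosing two
indices of `J₁` and `c - 2` outside it, the probability is at least
`C(p, 2) C(N - p, c - 2) / C(N, c)`, which equals
`C(p, 2) c (c - 1) / (N (N - 1)) · ∏_{j < c - 2} (N - p - j) / (N - 2 - j)`.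
Each factor of the product is at least `1 - 10α/c` because `10αm/c ≥ n + 1 ≥ p`, and the
prefactor is at least `c² n² / (12800 m²)` because `p ≥ n/10`, `p - 1 ≥ n/20` and `N ≤ 4m`.
-/

section Exchangeable

variable {ι β : Type*}

lemma exists_perm_image_eq [DecidableEq ι] {S T : Finset ι} (h : #S = #T) :
    ∃ e : Equiv.Perm ι, S.image e = T := by
  have := Set.powersetCard.isPretransitive (α := ι) (n := #S)
  obtain ⟨e, he⟩ := MulAction.exists_smul_eq (Equiv.Perm ι)
    (⟨S, rfl⟩ : Set.powersetCard ι #S) ⟨T, h.symm⟩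
  exact ⟨e, by simpa [Subtype.ext_iff, smul_finset_def] using he⟩

variable [Fintype ι] [DecidableEq β]

lemma exists_forall_card_fiber_eq [Fintype β] (k : β → ℕ) (hk : ∑ b, k b = Fintype.card ι) :
    ∃ π : ι → β, ∀ b, #{i | π i = b} = k b := by
  let e : ι ≃ Σ b, Fin (k b) := Fintype.equivOfCardEq (by simp [hk])
  refine ⟨fun i => (e i).1, fun b => ?_⟩
  calc #{i | (e i).1 = b}
      = #(({b} : Finset β).sigma fun b => (univ : Finset (Fin (k b)))) :=
        card_equiv e (by simp)
    _ = k b := by simp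

variable [DecidableEq ι]

lemma fiber_comp_perm_eq_image (π : ι → β) (e : Equiv.Perm ι) (b : β) :
    ({i | (π ∘ e) i = b} : Finset ι) = ({i | π i = b} : Finset ι).image e.symm := by
  ext i
  simp [Equiv.symm_apply_eq]

lemma card_filter_fiber_eq_of_card_eq (V : Finset (ι → β))
    (hV : ∀ π ∈ V, ∀ e : Equiv.Perm ι, π ∘ e ∈ V) (b : β) {S T : Finset ι} (h : #S = #T) :
    #{π ∈ V | ({i | π i = b} : Finset ι) = S} = #{π ∈ V | ({i | π i = b} : Finset ι) = T} := by
  obtain ⟨e, rfl⟩ := exists_perm_image_eq h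
  apply card_nbij' (· ∘ e.symm) (· ∘ e)
  · intro π hπ
    simp only [mem_coe, mem_filter] at hπ ⊢
    refine ⟨hV _ hπ.1 _, ?_⟩
    rw [fiber_comp_perm_eq_image, Equiv.symm_symm, hπ.2]
  · intro π hπ
    simp only [mem_coe, mem_filter] at hπ ⊢
    refine ⟨hV _ hπ.1 _, ?_⟩
    rw [fiber_comp_perm_eq_image, hπ.2, image_image]
    simp
  · intro π _
    simp [Function.comp_assoc]
  · intro π _
    simp [Function.comp_assoc]

theorem card_filter_fiber_mul_choose (V : Finset (ι → β))
    (hV : ∀ π ∈ V, ∀ e : Equiv.Perm ι, π ∘ e ∈ V) (b : β) {k : ℕ} (hk : k ≤ Fintype.card ι)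
    (hVk : ∀ π ∈ V, #{i | π i = b} = k) (P : Finset ι → Prop) [DecidablePred P] :
    #{π ∈ V | P {i | π i = b}} * (Fintype.card ι).choose k
      = #{S ∈ powersetCard k univ | P S} * #V := by
  obtain ⟨S₀, -, hS₀⟩ := exists_subset_card_eq (s := (univ : Finset ι)) (by simpa using hk)
  have count (Q : Finset ι → Prop) [DecidablePred Q] :
      #{π ∈ V | Q {i | π i = b}}
        = #{S ∈ powersetCard k univ | Q S} * #{π ∈ V | ({i | π i = b} : Finset ι) = S₀} := by
    rw [card_eq_sum_card_fiberwise (f := fun π => ({i | π i = b} : Finset ι))]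
    · refine sum_const_nat fun S hS => ?_
      rw [mem_filter, mem_powersetCard] at hS
      rw [filter_filter, ← card_filter_fiber_eq_of_card_eq V hV b (hS.1.2.trans hS₀.symm)]
      congr 1
      exact filter_congr fun π _ => ⟨And.right, fun h => ⟨h ▸ hS.2, h⟩⟩
    · intro π hπ
      simp only [mem_coe, mem_filter, mem_powersetCard] at hπ ⊢
      exact ⟨⟨subset_univ _, hVk π hπ.1⟩, hπ.2⟩
  have hV' := count fun _ => True
  simp only [filter_true, card_powersetCard, card_univ] at hV'
  rw [count P, hV']
  ring

end Exchangeable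

lemma comp_perm_mem_validAssignments {m n c : ℕ} {π : Fin (NN m n c) → Label}
    (hπ : π ∈ validAssignments m n c) (e : Equiv.Perm (Fin (NN m n c))) :
    π ∘ e ∈ validAssignments m n c := by
  rw [validAssignments, Finset.mem_filter] at hπ ⊢
  simpa only [labelSet, fiber_comp_perm_eq_image, card_image_of_injective _ e.symm.injective,
    mem_univ, true_and] using hπ

lemma validAssignments_nonempty (m n c : ℕ) : (validAssignments m n c).Nonempty := by
  obtain ⟨π, hπ⟩ := exists_forall_card_fiber_eq (ι := Fin (NN m n c))
    (fun L : Label => match L with | .BO => m | .BN => c | .SO => n | .SN => c)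
    (by rw [Fintype.card_fin]; simp [Finset.univ, Fintype.elems, NN]; ring)
  exact ⟨π, mem_filter.2 ⟨mem_univ _, hπ .BO, hπ .BN, hπ .SO, hπ .SN⟩⟩

lemma prOf_filter_labelSet_SN (m n c : ℕ) (P : Finset (Fin (NN m n c)) → Prop)
    [DecidablePred P] :
    prOf m n c {π ∈ validAssignments m n c | P (labelSet m n c .SN π)}
      = #{S ∈ powersetCard c univ | P S} / ((NN m n c).choose c : ℝ) := by
  have key := card_filter_fiber_mul_choose (validAssignments m n c)
    (fun _ hπ e => comp_perm_mem_validAssignments hπ e) .SN (k := c)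
    (by rw [Fintype.card_fin, NN]; omega)
    (fun _ hπ => (Finset.mem_filter.1 hπ).2.2.2.2) P
  rw [Fintype.card_fin] at key
  have hchoose : 0 < (NN m n c).choose c := Nat.choose_pos (by simp only [NN]; omega)
  rw [prOf, div_eq_div_iff (by exact_mod_cast (validAssignments_nonempty m n c).card_pos.ne')
    (by exact_mod_cast hchoose.ne')]
  exact_mod_cast key

namespace Label

def swapNew : Label → Label
  | BN => SN
  | SN => BN
  | BO => BO
  | SO => SO

lemma swapNew_involutive : Function.Involutive swapNew := by
  intro L; cases L <;> rfl

end Label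

def reflect {N : ℕ} (π : Fin N → Label) : Fin N → Label := fun i => (π i.rev).swapNew

lemma reflect_reflect {N : ℕ} (π : Fin N → Label) : reflect (reflect π) = π := by
  funext i
  simp [reflect, Label.swapNew_involutive _]

lemma labelSet_reflect (m n c : ℕ) (L : Label) (π : Fin (NN m n c) → Label) :
    labelSet m n c L (reflect π) = (labelSet m n c L.swapNew π).map Fin.revPerm.toEmbedding := by
  ext i
  simp [labelSet, reflect, Label.swapNew_involutive.eq_iff, mem_map_equiv]

lemma reflect_mem_validAssignments {m n c : ℕ} {π : Fin (NN m n c) → Label}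
    (hπ : π ∈ validAssignments m n c) : reflect π ∈ validAssignments m n c := by
  rw [validAssignments, Finset.mem_filter] at hπ ⊢
  simp only [labelSet_reflect, card_map, Label.swapNew]
  exact ⟨mem_univ _, hπ.2.1, hπ.2.2.2.2, hπ.2.2.2.1, hπ.2.2.1⟩

lemma map_rev_I1 (m n c : ℕ) : (I1 m n c).map Fin.revPerm.toEmbedding = J1 m n c := by
  ext i
  simp only [I1, J1, mem_map_equiv, Finset.mem_filter, mem_univ, true_and, Fin.revPerm_symm,
    Fin.revPerm_apply, Fin.val_rev]
  omega

lemma card_J1 {m n c : ℕ} (h : pVal n ≤ NN m n c) : #(J1 m n c) = pVal n := by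
  rw [← map_rev_I1, card_map, I1, Fin.card_filter_val_lt, min_eq_right h]

lemma card_J1_inter_labelSet_SN_reflect (m n c : ℕ) (π : Fin (NN m n c) → Label) :
    #(J1 m n c ∩ labelSet m n c .SN (reflect π)) = #(I1 m n c ∩ labelSet m n c .BN π) := by
  rw [labelSet_reflect, ← map_rev_I1, ← map_inter, card_map]
  rfl

lemma prOf_two_le_I1_BN_eq_J1_SN (m n c : ℕ) :
    prOf m n c ((validAssignments m n c).filter
        (fun π => 2 ≤ (I1 m n c ∩ labelSet m n c .BN π).card)) =
      prOf m n c ((validAssignments m n c).filter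
        (fun π => 2 ≤ (J1 m n c ∩ labelSet m n c .SN π).card)) := by
  rw [prOf, prOf]
  congr 2
  refine card_nbij' reflect reflect ?_ ?_ (fun π _ => reflect_reflect π)
    (fun π _ => reflect_reflect π)
  · intro π hπ
    simp only [mem_coe, Finset.mem_filter] at hπ ⊢
    exact ⟨reflect_mem_validAssignments hπ.1, card_J1_inter_labelSet_SN_reflect m n c π ▸ hπ.2⟩
  · intro π hπ
    simp only [mem_coe, Finset.mem_filter] at hπ ⊢
    rw [← card_J1_inter_labelSet_SN_reflect, reflect_reflect]
    exact ⟨reflect_mem_validAssignments hπ.1, hπ.2⟩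

lemma choose_mul_choose_le_card_filter {ι : Type*} [Fintype ι] [DecidableEq ι] (J : Finset ι)
    {r k : ℕ} (hrk : r ≤ k) :
    (#J).choose r * (Fintype.card ι - #J).choose (k - r)
      ≤ #{S ∈ powersetCard k (univ : Finset ι) | r ≤ #(J ∩ S)} := by
  have split {A B : Finset ι} (hA : A ⊆ J) (hB : B ⊆ Jᶜ) :
      J ∩ (A ∪ B) = A ∧ Jᶜ ∩ (A ∪ B) = B := by
    constructor <;> ext x <;> grind [mem_compl]
  rw [← card_compl, ← card_powersetCard, ← card_powersetCard, ← card_product]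
  refine card_le_card_of_injOn (fun AB => AB.1 ∪ AB.2) ?_ ?_
  · rintro ⟨A, B⟩ hAB
    simp only [mem_coe, mem_product, mem_powersetCard] at hAB
    have hdisj : Disjoint A B :=
      disjoint_of_subset_left hAB.1.1 (disjoint_of_subset_right hAB.2.1 disjoint_compl_right)
    simp only [mem_coe, Finset.mem_filter, mem_powersetCard]
    refine ⟨⟨subset_univ _, ?_⟩, ?_⟩
    · rw [card_union_of_disjoint hdisj, hAB.1.2, hAB.2.2]
      omega
    · rw [(split hAB.1.1 hAB.2.1).1, hAB.1.2]
  · rintro ⟨A, B⟩ hAB ⟨A', B'⟩ hAB' h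
    simp only [mem_coe, mem_product, mem_powersetCard] at hAB hAB' h
    obtain ⟨hA, hB⟩ := split hAB.1.1 hAB.2.1
    obtain ⟨hA', hB'⟩ := split hAB'.1.1 hAB'.2.1
    rw [h] at hA hB
    exact Prod.ext (hA.symm.trans hA') (hB.symm.trans hB')

lemma one_sub_pow_mul_descFactorial_le {a b k : ℕ} {t : ℝ} (ht0 : 0 ≤ t) (ht1 : t ≤ 1)
    (hka : k ≤ a) (hab : a ≤ b) (h : (b : ℝ) - a ≤ t * ((b : ℝ) - k)) :
    (1 - t) ^ k * b.descFactorial k ≤ a.descFactorial k := by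
  induction k with
  | zero => simp
  | succ k ih =>
    push_cast at h
    have hfactor : (1 - t) * ((b : ℝ) - k) ≤ a - k := by nlinarith
    rw [Nat.descFactorial_succ, Nat.descFactorial_succ, Nat.cast_mul, Nat.cast_mul,
      Nat.cast_sub (by omega), Nat.cast_sub (by omega)]
    calc (1 - t) ^ (k + 1) * ((b - k) * b.descFactorial k)
        = ((1 - t) * (b - k)) * ((1 - t) ^ k * b.descFactorial k) := by ring
      _ ≤ (a - k) * a.descFactorial k :=
        mul_le_mul hfactor (ih (by omega) (by nlinarith)) (by positivity)
          (by linarith [show (k : ℝ) + 1 ≤ a by exact_mod_cast hka])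

lemma choose_add_two_mul_factorial (M k : ℕ) :
    (M + 2).choose (k + 2) * ((k + 2) * (k + 1) * k.factorial)
      = (M + 2) * (M + 1) * M.descFactorial k := by
  rw [mul_assoc (M + 2), ← Nat.succ_descFactorial_succ, ← Nat.succ_descFactorial_succ,
    Nat.descFactorial_eq_factorial_mul_choose, Nat.factorial_succ, Nat.factorial_succ]
  ring

lemma add_two_sq_mul_le {k M m : ℕ} (h : M + 2 ≤ 4 * m) :
    ((k : ℝ) + 2) ^ 2 * ((M + 2) * (M + 1)) ≤ 32 * m ^ 2 * ((k + 2) * (k + 1)) := by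
  have hM : ((M : ℝ) + 2) * (M + 1) ≤ 16 * m ^ 2 := by
    have : (M : ℝ) + 2 ≤ 4 * m := by exact_mod_cast h
    nlinarith
  have := mul_le_mul (show (k : ℝ) + 2 ≤ 2 * (k + 1) by linarith) hM (by positivity) (by positivity)
  nlinarith

lemma le_choose_two_mul_choose_div_choose {m p N k : ℕ} {t : ℝ} (ht0 : 0 ≤ t) (ht1 : t ≤ 1)
    (hp : 2 ≤ p) (hpN : p + k ≤ N) (hmN : m + k + 2 ≤ N) (hNm : N ≤ 4 * m)
    (htm : (p : ℝ) - 2 ≤ t * m) :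
    ((k + 2 : ℕ) : ℝ) ^ 2 / 32 * (p.choose 2 / m ^ 2) * (1 - t) ^ (k + 2)
      ≤ (p.choose 2 * (N - p).choose k : ℕ) / (N.choose (k + 2) : ℝ) := by
  obtain ⟨M, rfl⟩ : ∃ M, N = M + 2 := ⟨N - 2, by omega⟩
  have hm : (0 : ℝ) < m := by exact_mod_cast (show 0 < m by omega)
  have hchoose : (0 : ℝ) < (M + 2).choose (k + 2) := by exact_mod_cast Nat.choose_pos (by omega)
  have hfact : (0 : ℝ) < (k + 2) * (k + 1) * k.factorial := by positivity
  have hC : ((M + 2).choose (k + 2) : ℝ) * ((k + 2) * (k + 1) * k.factorial)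
      = (M + 2) * (M + 1) * M.descFactorial k := by
    exact_mod_cast choose_add_two_mul_factorial M k
  have hD : ((M + 2 - p).choose k : ℝ) * k.factorial = (M + 2 - p).descFactorial k := by
    rw [Nat.descFactorial_eq_factorial_mul_choose, mul_comm]
    push_cast
    ring
  have hfalling : (1 - t) ^ (k + 2) * M.descFactorial k ≤ (M + 2 - p).descFactorial k := by
    refine le_trans ?_ (one_sub_pow_mul_descFactorial_le (a := M + 2 - p) (b := M)
      ht0 ht1 (by omega) (by omega) ?_)
    · exact mul_le_mul_of_nonneg_right
        (pow_le_pow_of_le_one (by linarith) (by linarith) (by omega)) (Nat.cast_nonneg _)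
    · have hmk : (m : ℝ) ≤ M - k := by
        have : m + k ≤ M := by omega
        rw [le_sub_iff_add_le]
        exact_mod_cast this
      rw [Nat.cast_sub (by omega)]
      push_cast
      nlinarith
  have hsize : ((k + 2 : ℕ) : ℝ) ^ 2 * ((M + 2) * (M + 1)) / (32 * m ^ 2)
      ≤ (k + 2) * (k + 1) := by
    rw [div_le_iff₀ (by positivity), mul_comm _ (32 * _ : ℝ)]
    exact_mod_cast add_two_sq_mul_le hNm
  rw [le_div_iff₀ hchoose, ← mul_le_mul_iff_left₀ hfact]
  calc ((k + 2 : ℕ) : ℝ) ^ 2 / 32 * (p.choose 2 / m ^ 2) * (1 - t) ^ (k + 2)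
        * (M + 2).choose (k + 2) * ((k + 2) * (k + 1) * k.factorial)
      = (p.choose 2 : ℝ) * ((((k + 2 : ℕ) : ℝ) ^ 2 * ((M + 2) * (M + 1)) / (32 * m ^ 2))
          * ((1 - t) ^ (k + 2) * M.descFactorial k)) := by
        rw [mul_assoc _ ((M + 2).choose (k + 2) : ℝ), hC]
        field_simp
    _ ≤ (p.choose 2 : ℝ) * (((k + 2) * (k + 1)) * ((M + 2 - p).descFactorial k : ℝ)) := by
        gcongr
    _ = ((p.choose 2 * (M + 2 - p).choose k : ℕ) : ℝ) * ((k + 2) * (k + 1) * k.factorial) := by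
        rw [← hD]
        push_cast
        ring

lemma sq_le_four_hundred_mul_choose_two_pVal {n : ℕ} (hn : 20 ≤ n) :
    (n : ℝ) ^ 2 ≤ 400 * (pVal n).choose 2 := by
  have h10 : (n : ℝ) ≤ 10 * pVal n := by
    exact_mod_cast (show n ≤ 10 * pVal n by unfold pVal; omega)
  have h20 : (n : ℝ) + 20 ≤ 20 * pVal n := by
    exact_mod_cast (show n + 20 ≤ 20 * pVal n by unfold pVal; omega)
  rw [Nat.cast_choose_two]
  nlinarith

/-- Let `α > 0` with `10α ≤ c`. Suppose `c ≥ 2`, `m ≥ n + c + 2`,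
`n ≥ 20`, and `n ≤ 10αm/c − 1`. Then
`Pr[|I₁ ∩ B_New| ≥ 2] = Pr[|J₁ ∩ S_New| ≥ 2] ≥ (c²/12800)·(n²/m²)·(1 − 10α/c)^c`. -/
theorem pr_two_new_in_I1 (m n c : ℕ) (α : ℝ) (hα : 0 < α) (hαc : 10 * α ≤ (c : ℝ))
    (hc : 2 ≤ c) (hm : n + c + 2 ≤ m) (hn20 : 20 ≤ n)
    (hn : (n : ℝ) ≤ 10 * α * (m : ℝ) / (c : ℝ) - 1) :
    prOf m n c ((validAssignments m n c).filter
        (fun π => 2 ≤ (I1 m n c ∩ labelSet m n c .BN π).card)) =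
      prOf m n c ((validAssignments m n c).filter
        (fun π => 2 ≤ (J1 m n c ∩ labelSet m n c .SN π).card)) ∧
    ((c : ℝ) ^ 2 / 12800) * ((n : ℝ) ^ 2 / (m : ℝ) ^ 2) * (1 - 10 * α / (c : ℝ)) ^ c ≤
      prOf m n c ((validAssignments m n c).filter
        (fun π => 2 ≤ (J1 m n c ∩ labelSet m n c .SN π).card)) := by
  refine ⟨prOf_two_le_I1_BN_eq_J1_SN m n c, ?_⟩
  obtain ⟨k, rfl⟩ : ∃ k, c = k + 2 := ⟨c - 2, by omega⟩
  set t := 10 * α / ((k + 2 : ℕ) : ℝ)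
  have ht0 : 0 ≤ t := by positivity
  have ht1 : t ≤ 1 := div_le_one_of_le₀ hαc (by positivity)
  have hp : 2 ≤ pVal n ∧ pVal n ≤ n + 1 := by unfold pVal; omega
  have htm : (pVal n : ℝ) - 2 ≤ t * m := by
    have : (pVal n : ℝ) ≤ n + 1 := by exact_mod_cast hp.2
    rw [mul_div_right_comm] at hn
    linarith
  have hN : NN m n (k + 2) = m + n + 2 * (k + 2) := rfl
  rw [prOf_filter_labelSet_SN m n (k + 2) (fun S => 2 ≤ #(J1 m n (k + 2) ∩ S))]
  calc _ ≤ ((k + 2 : ℕ) : ℝ) ^ 2 / 32 * ((pVal n).choose 2 / m ^ 2) * (1 - t) ^ (k + 2) := by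
        refine mul_le_mul_of_nonneg_right ?_ (pow_nonneg (by linarith) _)
        rw [show ((k + 2 : ℕ) : ℝ) ^ 2 / 12800 * ((n : ℝ) ^ 2 / m ^ 2)
          = ((k + 2 : ℕ) : ℝ) ^ 2 / 32 * ((n ^ 2 / 400) / m ^ 2) by ring]
        gcongr
        linarith [sq_le_four_hundred_mul_choose_two_pVal hn20]
    _ ≤ ((pVal n).choose 2 * (NN m n (k + 2) - pVal n).choose k : ℕ)
          / ((NN m n (k + 2)).choose (k + 2) : ℝ) :=
        le_choose_two_mul_choose_div_choose ht0 ht1 hp.1 (by omega) (by omega) (by omega) htm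
    _ ≤ _ := by
        gcongr
        simpa [card_J1 (by omega : pVal n ≤ NN m n (k + 2))] using
          choose_mul_choose_le_card_filter (J1 m n (k + 2)) (r := 2) (k := k + 2) (by omega)
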